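/- arXiv:1206.4899 — 4 statements merged into one kernel-verified Lean document; each statement's English description precedes it below -/
import Mathlib

section
/- Let {R_n} be a monic polynomial sequence satisfying (x R_{n+1}(x))' = (n+2) R_{n+1}(x) − (n+1)(λ_n/λ_{n+1}) R_n(x) for all n ≥ 0 (with λ_n ≠ 0) and R_{-1} := 0. Then for every real α and all n ≥ 0, (1/x)·A(x·R_{n+1}(x)) + 2α (x R_{n+1}(x))' = −x R_{n+1}(x) + (n+2)(n+2+2α) R_{n+1}(x) − (n+1)(λ_n/λ_{n+1})(2n+3+2α) R_n(x) + n(n+1)(λ_{n−1}/λ_{n+1}) R_{n−1}(x), where A f = x² f'' + x f' − x f. -/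
/-!
Since `A` divides by `x` exactly, `(1/x)A(x R_{n+1}) = x (x R_{n+1})'' + (x R_{n+1})' − x R_{n+1}`.
Differentiating the recursion once gives `(x R_{n+1})''` in terms of `R_{n+1}'` and `R_n'`, and the
recursion itself, rewritten as `x R_m' = m R_m − m (λ_{m−1}/λ_m) R_{m−1}`, eliminates `x R_m'`.
The coefficient of `R_{n−1}` then comes out as `n(n+1) (λ_n/λ_{n+1}) (λ_{n−1}/λ_n)`, which telescopes.
-/

open Polynomial

/-- The differential operator `A f = x² f'' + x f' − x f` on polynomials. -/
noncomputable def opA (f : Polynomial ℝ) : Polynomial ℝ :=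
  X ^ 2 * derivative (derivative f) + X * derivative f - X * f

theorem Polynomial.divX_X_mul {S : Type*} [Semiring S] (p : S[X]) : (X * p).divX = p := by
  ext n
  rw [coeff_divX, coeff_X_mul]

theorem divX_opA (f : ℝ[X]) :
    (opA f).divX = X * derivative (derivative f) + derivative f - f := by
  rw [opA, show X ^ 2 * derivative (derivative f) + X * derivative f - X * f
      = X * (X * derivative (derivative f) + derivative f - f) by ring, divX_X_mul]

/-- At `m = 0` both sides vanish, so no convention for `R (0 - 1)` is needed. -/
theorem X_mul_derivative_eq_of_derivative_X_mul {R : ℕ → ℝ[X]} {l : ℕ → ℝ}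
    (hR0 : derivative (R 0) = 0)
    (hdiff : ∀ n, derivative (X * R (n + 1)) =
      C ((n : ℝ) + 2) * R (n + 1) - C (((n : ℝ) + 1) * (l n / l (n + 1))) * R n) (m : ℕ) :
    X * derivative (R m) = C (m : ℝ) * R m - C ((m : ℝ) * (l (m - 1) / l m)) * R (m - 1) := by
  cases m with
  | zero => simp [hR0]
  | succ k =>
    have h := hdiff k
    rw [derivative_mul, derivative_X, one_mul] at h
    push_cast
    simp only [map_add, map_ofNat, map_one] at h ⊢
    linear_combination h

theorem reversed_appell_opA_relation_general (R : ℕ → Polynomial ℝ) (l : ℕ → ℝ)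
    (hdeg : ∀ n, (R n).natDegree = n)
    (hlne : ∀ n, l n ≠ 0)
    (hdiff : ∀ n, derivative (X * R (n + 1)) =
      C ((n : ℝ) + 2) * R (n + 1) - C (((n : ℝ) + 1) * (l n / l (n + 1))) * R n) :
    ∀ (α : ℝ) (n : ℕ),
      (opA (X * R (n + 1))).divX + C (2 * α) * derivative (X * R (n + 1)) =
        -(X * R (n + 1)) + C (((n : ℝ) + 2) * ((n : ℝ) + 2 + 2 * α)) * R (n + 1)
          - C (((n : ℝ) + 1) * (l n / l (n + 1)) * (2 * (n : ℝ) + 3 + 2 * α)) * R n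
          + C ((n : ℝ) * ((n : ℝ) + 1) * (l (n - 1) / l (n + 1))) * R (n - 1) := by
  intro α n
  have hXR' := X_mul_derivative_eq_of_derivative_X_mul
    (derivative_of_natDegree_zero (hdeg 0)) hdiff
  have hXR_succ := hXR' (n + 1)
  push_cast at hXR_succ
  have hXR'' : derivative (derivative (X * R (n + 1))) =
      C ((n : ℝ) + 2) * derivative (R (n + 1))
        - C (((n : ℝ) + 1) * (l n / l (n + 1))) * derivative (R n) := by
    rw [hdiff n, derivative_sub, derivative_C_mul, derivative_C_mul]
  have hratio : l (n - 1) / l (n + 1) = l n / l (n + 1) * (l (n - 1) / l n) := by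
    field_simp [hlne n]
  rw [divX_opA, hratio]
  linear_combination (norm := (simp only [map_mul, map_add, map_ofNat, map_one]; ring))
    X * hXR'' + (1 + C (2 * α)) * hdiff n + C ((n : ℝ) + 2) * hXR_succ
      - C (((n : ℝ) + 1) * (l n / l (n + 1))) * hXR' n

/-- If a monic sequence `{R_n}` satisfies the reversed-Appell differential recursion
`(x R_{n+1})' = (n+2) R_{n+1} − (n+1)(λ_n/λ_{n+1}) R_n`, then for every `α`,
`(1/x)A(x R_{n+1}) + 2α (x R_{n+1})' = −x R_{n+1} + (n+2)(n+2+2α) R_{n+1}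
− (n+1)(λ_n/λ_{n+1})(2n+3+2α) R_n + n(n+1)(λ_{n−1}/λ_{n+1}) R_{n−1}`
(with `R_{−1} = 0`; the `n = 0` term has vanishing coefficient `n(n+1)`). -/
theorem reversed_appell_opA_relation (R : ℕ → Polynomial ℝ) (l : ℕ → ℝ)
    (hmonic : ∀ n, (R n).Monic) (hdeg : ∀ n, (R n).natDegree = n)
    (hlne : ∀ n, l n ≠ 0)
    (hdiff : ∀ n, derivative (X * R (n + 1)) =
      C ((n : ℝ) + 2) * R (n + 1) - C (((n : ℝ) + 1) * (l n / l (n + 1))) * R n) :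
    ∀ (α : ℝ) (n : ℕ),
      (opA (X * R (n + 1))).divX + C (2 * α) * derivative (X * R (n + 1)) =
        -(X * R (n + 1)) + C (((n : ℝ) + 2) * ((n : ℝ) + 2 + 2 * α)) * R (n + 1)
          - C (((n : ℝ) + 1) * (l n / l (n + 1)) * (2 * (n : ℝ) + 3 + 2 * α)) * R n
          + C ((n : ℝ) * ((n : ℝ) + 1) * (l (n - 1) / l (n + 1))) * R (n - 1) :=
  reversed_appell_opA_relation_general R l hdeg hlne hdiff
end

section
/- Define numbers T̂_{n,ν}(α) by T̂_{n,n}(α) = 1, T̂_{n,−1}(α) = 0, and T̂_{n+1,ν}(α) = T̂_{n,ν−1}(α) − (2α+ν+1)(ν+1) T̂_{n,ν}(α) for 0 ≤ ν ≤ n. Then for every n ≥ 0 and every complex τ, (τ²/4 + α²)^n = Σ_{ν=0}^{n} T̂_{n,ν}(α) (α+1+iτ/2)_ν (α+1−iτ/2)_ν. -/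
open Complex Finset

/-!
Write `P_ν(τ) = (α+1+iτ/2)_ν (α+1−iτ/2)_ν` and `c = τ²/4 + α²`. Since
`(α+ν+1)² + τ²/4 = c + (2α+ν+1)(ν+1)`, the basis satisfies `c P_ν = P_{ν+1} − (2α+ν+1)(ν+1) P_ν`.
Multiplying an expansion of `c^n` by `c` with this rule and collecting coefficients of `P_ν`
reproduces exactly the recursion defining `T̂_{n+1,ν}`, so the expansion follows by induction on `n`.
-/

theorem pow_eq_sum_of_succ_eq_add_mul {R : Type*} [CommRing R] (c : R) (a P : ℕ → R)
    (T : ℕ → ℕ → R) (hP₀ : P 0 = 1) (hP : ∀ ν, P (ν + 1) = (c + a ν) * P ν)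
    (hdiag : ∀ n, T n n = 1)
    (hrec : ∀ n ν, ν ≤ n → T (n + 1) ν = (if ν = 0 then 0 else T n (ν - 1)) - a ν * T n ν)
    (n : ℕ) : c ^ n = ∑ ν ∈ range (n + 1), T n ν * P ν := by
  induction n with
  | zero => simp [hdiag, hP₀]
  | succ n ih =>
    have hshift : ∑ ν ∈ range (n + 1), (if ν = 0 then 0 else T n (ν - 1)) * P ν =
        ∑ ν ∈ range n, T n ν * P (ν + 1) := by
      rw [sum_range_succ']
      simp
    have hnext : ∑ ν ∈ range (n + 1), T (n + 1) ν * P ν =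
        ∑ ν ∈ range (n + 1), ((if ν = 0 then 0 else T n (ν - 1)) * P ν - a ν * T n ν * P ν) :=
      sum_congr rfl fun ν hν => by
        rw [hrec n ν (Nat.lt_succ_iff.mp (mem_range.mp hν))]
        ring
    calc c ^ (n + 1) = ∑ ν ∈ range (n + 1), T n ν * (c * P ν) := by
          rw [pow_succ', ih, mul_sum]
          exact sum_congr rfl fun _ _ => by ring
      _ = ∑ ν ∈ range (n + 1), (T n ν * P (ν + 1) - a ν * T n ν * P ν) :=
          sum_congr rfl fun ν _ => by rw [hP]; ring
      _ = ∑ ν ∈ range (n + 2), T (n + 1) ν * P ν := by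
          rw [sum_range_succ _ (n + 1), hnext, sum_sub_distrib, sum_sub_distrib, hshift,
            sum_range_succ (fun ν => T n ν * P (ν + 1)), hdiag, hdiag]
          ring

theorem pochhammer_conj_prod_succ (α τ : ℂ) (ν : ℕ) :
    (∏ σ ∈ range (ν + 1), (α + 1 + I * τ / 2 + σ)) *
        ∏ σ ∈ range (ν + 1), (α + 1 - I * τ / 2 + σ) =
      (τ ^ 2 / 4 + α ^ 2 + (2 * α + ν + 1) * ((ν : ℂ) + 1)) *
        ((∏ σ ∈ range ν, (α + 1 + I * τ / 2 + σ)) *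
          ∏ σ ∈ range ν, (α + 1 - I * τ / 2 + σ)) := by
  simp only [prod_range_succ]
  linear_combination (-(τ ^ 2 / 4) * (∏ σ ∈ range ν, (α + 1 + I * τ / 2 + σ)) *
    ∏ σ ∈ range ν, (α + 1 - I * τ / 2 + σ)) * I_sq

/-- The numbers `T̂_{n,ν}(α)` defined by `T̂_{n,n} = 1`, `T̂_{n,−1} = 0` and
`T̂_{n+1,ν} = T̂_{n,ν−1} − (2α+ν+1)(ν+1) T̂_{n,ν}` expand the powers of
`τ²/4 + α²` in the central factorial basis:
`(τ²/4 + α²)^n = Σ_{ν=0}^{n} T̂_{n,ν}(α) (α+1+iτ/2)_ν (α+1−iτ/2)_ν`. -/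
theorem power_central_factorial_expansion (α : ℂ) (T : ℕ → ℕ → ℂ)
    (hdiag : ∀ n, T n n = 1)
    (hrec : ∀ n ν, ν ≤ n → T (n + 1) ν =
      (if ν = 0 then 0 else T n (ν - 1)) - (2 * α + ν + 1) * ((ν : ℂ) + 1) * T n ν) :
    ∀ (n : ℕ) (τ : ℂ),
      (τ ^ 2 / 4 + α ^ 2) ^ n =
        ∑ ν ∈ Finset.range (n + 1), T n ν *
          ((∏ σ ∈ Finset.range ν, (α + 1 + Complex.I * τ / 2 + σ)) *
            (∏ σ ∈ Finset.range ν, (α + 1 - Complex.I * τ / 2 + σ))) :=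
  fun n τ => pow_eq_sum_of_succ_eq_add_mul _ (fun ν => (2 * α + ν + 1) * ((ν : ℂ) + 1)) _ T
    (by simp) (pochhammer_conj_prod_succ α τ) hdiag hrec n
end

section
/- Let u be a linear functional on polynomials satisfying the two distributional equations D(x² u) + x(Nρ(x) − (3+2α)) u = 0 and D(xρ(x) u) + ψ₂(x) u = 0 for monic polynomials ρ, ψ₂ (with appropriate normalization N ≠ 0). If u is regular (i.e., ⟨u, p·q⟩ defines a nondegenerate pairing on each degree), then the compatibility condition xρ(x)·(N x ρ(x) − (1+2α)x) = x²(ψ₂(x) + (xρ(x))') holds as a polynomial identity, which forces ψ₂(x) = ρ(x)(Nρ(x) − (1+2α)) − (xρ(x))'. -/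
open Polynomial

/-! The compatibility condition of two Pearson equations `D(A u) + B u = 0` and
`D(C u) + E u = 0` is obtained by testing the first on `C g` and the second on `A g`: the terms
in `g'` cancel, leaving `(BC − EA + CA' − AC') u = 0`. For a regular form this multiplier must
vanish, since pairing it with the orthogonal polynomial of its own degree picks out its leading
coefficient times a nonzero norm. -/

def IsRegularForm (u : Polynomial ℂ →ₗ[ℂ] ℂ) : Prop :=
  ∃ (P : ℕ → Polynomial ℂ) (k : ℕ → ℂ),
    (∀ n, (P n).Monic) ∧ (∀ n, (P n).natDegree = n) ∧ (∀ n, k n ≠ 0) ∧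
    ∀ n m, u (P n * P m) = if n = m then k n else 0

theorem LinearMap.apply_mul_eq_leadingCoeff_mul_add {R : Type*} [CommRing R] (u : R[X] →ₗ[R] R)
    (r P Q : R[X]) :
    u (r * Q) = r.leadingCoeff * u (P * Q) + u ((r - C r.leadingCoeff * P) * Q) := by
  rw [show r * Q = C r.leadingCoeff * (P * Q) + (r - C r.leadingCoeff * P) * Q by ring,
    map_add, ← smul_eq_C_mul, map_smul, smul_eq_mul]

namespace Polynomial

/-- The distributional equation `D(A u) + B u = 0`, read through `⟨Du, f⟩ = −⟨u, f'⟩`. -/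
def PearsonEquation {R : Type*} [CommRing R] (u : R[X] →ₗ[R] R) (A B : R[X]) : Prop :=
  ∀ f : R[X], -u (A * derivative f) + u (B * f) = 0

theorem PearsonEquation.apply_compatibility_mul_eq_zero {R : Type*} [CommRing R]
    {u : R[X] →ₗ[R] R} {A B C E : R[X]} (h₁ : PearsonEquation u A B)
    (h₂ : PearsonEquation u C E) (g : R[X]) :
    u ((B * C - E * A + C * derivative A - A * derivative C) * g) = 0 := by
  have key : (B * C - E * A + C * derivative A - A * derivative C) * g =
      (B * (C * g) - A * derivative (C * g)) - (E * (A * g) - C * derivative (A * g)) := by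
    simp only [derivative_mul]
    ring
  rw [key, map_sub, map_sub, map_sub]
  linear_combination h₁ (C * g) - h₂ (A * g)

theorem degree_sub_C_leadingCoeff_mul_lt {K : Type*} [Field K] {r P : K[X]} (hr : r ≠ 0)
    (hP : P.Monic) (hdeg : P.natDegree = r.natDegree) :
    (r - C r.leadingCoeff * P).degree < r.degree := by
  have hlc : r.leadingCoeff ≠ 0 := leadingCoeff_ne_zero.mpr hr
  refine degree_sub_lt_left ?_ hr ?_
  · rw [degree_C_mul hlc, degree_eq_natDegree hr, degree_eq_natDegree hP.ne_zero, hdeg]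
  · rw [leadingCoeff_mul, leadingCoeff_C, hP.leadingCoeff, mul_one]

section OrthogonalSequence

variable {K : Type*} [Field K] {u : K[X] →ₗ[K] K} {P : ℕ → K[X]}

theorem apply_mul_orthogonal_eq_zero_of_degree_lt (hP : ∀ n, (P n).Monic)
    (hdeg : ∀ n, (P n).natDegree = n) (horth : ∀ n m, n ≠ m → u (P n * P m) = 0)
    (r : K[X]) (m : ℕ) (hrm : r.degree < m) : u (r * P m) = 0 := by
  induction hd : r.natDegree using Nat.strong_induction_on generalizing r with
  | _ d ih =>
    by_cases hr : r = 0
    · simp [hr]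
    have hrest_lt := degree_sub_C_leadingCoeff_mul_lt hr (hP d) (by rw [hdeg, hd])
    have hrest : u ((r - C r.leadingCoeff * P d) * P m) = 0 := by
      by_cases h0 : r - C r.leadingCoeff * P d = 0
      · simp [h0]
      · exact ih _ ((natDegree_lt_natDegree h0 hrest_lt).trans_eq hd) _ (hrest_lt.trans hrm) rfl
    have hdm : d ≠ m := by
      rw [← hd]
      exact_mod_cast (natDegree_lt_iff_degree_lt hr).mpr hrm |>.ne
    rw [u.apply_mul_eq_leadingCoeff_mul_add r (P d), horth d m hdm, hrest, mul_zero, add_zero]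

end OrthogonalSequence

end Polynomial

theorem IsRegularForm.eq_zero_of_forall_apply_mul_eq_zero {u : ℂ[X] →ₗ[ℂ] ℂ}
    (hu : IsRegularForm u) {p : ℂ[X]} (hp : ∀ g, u (p * g) = 0) : p = 0 := by
  obtain ⟨P, k, hP, hdeg, hk, horth⟩ := hu
  have horth' : ∀ n m, n ≠ m → u (P n * P m) = 0 := fun n m h => by simp [horth, h]
  by_contra hp0
  set d := p.natDegree
  have hrest : u ((p - C p.leadingCoeff * P d) * P d) = 0 :=
    apply_mul_orthogonal_eq_zero_of_degree_lt hP hdeg horth' _ d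
      (degree_sub_C_leadingCoeff_mul_lt hp0 (hP d) (hdeg d) |>.trans_le degree_le_natDegree)
  have hnorm : p.leadingCoeff * k d = 0 :=
    calc p.leadingCoeff * k d
        = p.leadingCoeff * u (P d * P d) + u ((p - C p.leadingCoeff * P d) * P d) := by
          rw [hrest, horth, if_pos rfl, add_zero]
      _ = u (p * P d) := (u.apply_mul_eq_leadingCoeff_mul_add p (P d) (P d)).symm
      _ = 0 := hp _
  exact mul_ne_zero (leadingCoeff_ne_zero.mpr hp0) (hk d) hnorm

theorem semiclassical_compatibility_general (α N : ℂ)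
    (ρ ψ₂ : Polynomial ℂ)
    (u : Polynomial ℂ →ₗ[ℂ] ℂ) (hu : IsRegularForm u)
    (heq1 : ∀ f : Polynomial ℂ,
      -u (X ^ 2 * derivative f) + u (X * (C N * ρ - C (3 + 2 * α)) * f) = 0)
    (heq2 : ∀ f : Polynomial ℂ,
      -u (X * ρ * derivative f) + u (ψ₂ * f) = 0) :
    X * ρ * (C N * X * ρ - C (1 + 2 * α) * X) =
        X ^ 2 * (ψ₂ + derivative (X * ρ)) ∧
      ψ₂ = ρ * (C N * ρ - C (1 + 2 * α)) - derivative (X * ρ) := by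
  have hcompat : ∀ g, u (X ^ 2 * (ρ * (C N * ρ - C (1 + 2 * α)) - derivative (X * ρ) - ψ₂) * g)
      = 0 := fun g => by
    convert PearsonEquation.apply_compatibility_mul_eq_zero heq1 heq2 g using 3
    simp only [derivative_mul, derivative_X, derivative_X_pow, C_add, C_mul, Nat.cast_ofNat,
      C_ofNat, C_1]
    ring
  have hψ₂ : ψ₂ = ρ * (C N * ρ - C (1 + 2 * α)) - derivative (X * ρ) := by
    have h := hu.eq_zero_of_forall_apply_mul_eq_zero hcompat
    rw [mul_eq_zero, sub_eq_zero, or_iff_right (pow_ne_zero 2 X_ne_zero)] at h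
    exact h.symm
  exact ⟨by rw [hψ₂]; ring, hψ₂⟩

/-- If a regular form `u` satisfies `D(x² u) + x(Nρ(x) − (3+2α)) u = 0` and
`D(xρ(x) u) + ψ₂(x) u = 0`, then the compatibility condition
`xρ·(Nxρ − (1+2α)x) = x²(ψ₂ + (xρ)')` holds, forcing
`ψ₂ = ρ(Nρ − (1+2α)) − (xρ)'`. -/
theorem semiclassical_compatibility (α N : ℂ) (hN : N ≠ 0)
    (ρ ψ₂ : Polynomial ℂ) (hρ : ρ.Monic) (hψ : ψ₂.Monic)
    (u : Polynomial ℂ →ₗ[ℂ] ℂ) (hu : IsRegularForm u)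
    (heq1 : ∀ f : Polynomial ℂ,
      -u (X ^ 2 * derivative f) + u (X * (C N * ρ - C (3 + 2 * α)) * f) = 0)
    (heq2 : ∀ f : Polynomial ℂ,
      -u (X * ρ * derivative f) + u (ψ₂ * f) = 0) :
    X * ρ * (C N * X * ρ - C (1 + 2 * α) * X) =
        X ^ 2 * (ψ₂ + derivative (X * ρ)) ∧
      ψ₂ = ρ * (C N * ρ - C (1 + 2 * α)) - derivative (X * ρ) :=
  semiclassical_compatibility_general α N ρ ψ₂ u hu heq1 heq2
end

section
/- Let {Ĥ_n(·; d)} be the d-symmetric Appell sequence defined by Ĥ_n(x) = x^n for 0 ≤ n ≤ d and Ĥ_{n+d+1}(x) = x Ĥ_{n+d}(x) − (d+1)^{−1} C(n+d, d) Ĥ_n(x) for n ≥ 0, where C denotes the binomial coefficient. Then this sequence has the Appell property: (d/dx) Ĥ_{n+1}(x) = (n+1) Ĥ_n(x) for all n ≥ 0. -/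
/-!
Write the recurrence as `H (n+d+1) = X H (n+d) - a n H n`. Differentiating it at `n = k+1` and
using the Appell property for `H (k+d+1)` and `H (k+1)` gives
`H (k+d+2)' = H (k+d+1) + (k+d+1) X H (k+d) - (k+1) a (k+1) H k`, while the recurrence at `n = k`
gives `(k+d+2) H (k+d+1) = H (k+d+1) + (k+d+1) (X H (k+d) - a k H k)`. These agree as soon as
`(k+1) a (k+1) = (k+d+1) a k`, which for `a k = (d+1)⁻¹ C(k+d, d)` is the absorption identity
for binomial coefficients. The first `d+1` cases follow from `H n = X^n` alone.
-/

open Polynomial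

namespace Polynomial.AppellRecurrence

variable {R : Type*} [CommRing R] {d : ℕ} {a : ℕ → R} {H : ℕ → R[X]}

theorem derivative_succ_of_lt (hinit : ∀ n ≤ d, H n = X ^ n) {n : ℕ} (hn : n < d) :
    derivative (H (n + 1)) = C ((n : R) + 1) * H n := by
  rw [hinit (n + 1) hn, hinit n hn.le, derivative_X_pow]
  push_cast
  ring

theorem derivative_succ_order (hinit : ∀ n ≤ d, H n = X ^ n)
    (hrec : ∀ n, H (n + d + 1) = X * H (n + d) - C (a n) * H n) :
    derivative (H (d + 1)) = C ((d : R) + 1) * H d := by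
  have h : H (d + 1) = X ^ (d + 1) - C (a 0) := by
    simpa only [zero_add, hinit d le_rfl, hinit 0 (Nat.zero_le d), pow_zero, mul_one, ← pow_succ']
      using hrec 0
  rw [h, hinit d le_rfl, derivative_sub, derivative_X_pow_succ, derivative_C, sub_zero]

theorem derivative_succ_add_succ (hrec : ∀ n, H (n + d + 1) = X * H (n + d) - C (a n) * H n)
    (ha : ∀ n : ℕ, ((n : R) + 1) * a (n + 1) = ((n : R) + d + 1) * a n) {k : ℕ}
    (hk : derivative (H (k + 1)) = C ((k : R) + 1) * H k)
    (hkd : derivative (H (k + d + 1)) = C (((k + d : ℕ) : R) + 1) * H (k + d)) :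
    derivative (H (k + 1 + d + 1)) = C (((k + 1 + d : ℕ) : R) + 1) * H (k + 1 + d) := by
  have hshift : k + 1 + d = k + d + 1 := by omega
  have hcoeff : C ((k : R) + 1) * C (a (k + 1)) = C ((k : R) + d + 1) * C (a k) := by
    rw [← C_mul, ← C_mul, ha]
  rw [hrec, hshift, derivative_sub, derivative_mul, derivative_X, derivative_C_mul, hkd, hk, hrec k]
  simp only [Nat.cast_add, Nat.cast_one, map_add, map_natCast, map_one] at hcoeff ⊢
  linear_combination (-H k) * hcoeff

theorem derivative_succ (hinit : ∀ n ≤ d, H n = X ^ n)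
    (hrec : ∀ n, H (n + d + 1) = X * H (n + d) - C (a n) * H n)
    (ha : ∀ n : ℕ, ((n : R) + 1) * a (n + 1) = ((n : R) + d + 1) * a n) (n : ℕ) :
    derivative (H (n + 1)) = C ((n : R) + 1) * H n := by
  induction n using Nat.strong_induction_on with
  | _ n ih =>
    rcases lt_or_ge n d with hn | hn
    · exact derivative_succ_of_lt hinit hn
    obtain ⟨m, rfl⟩ := Nat.exists_eq_add_of_le' hn
    cases m with
    | zero => simpa using derivative_succ_order hinit hrec
    | succ k => exact derivative_succ_add_succ hrec ha (ih k (by omega)) (ih (k + d) (by omega))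

end Polynomial.AppellRecurrence

theorem Nat.add_one_mul_choose_add_one_add (n d : ℕ) :
    (n + 1) * (n + 1 + d).choose d = (n + d + 1) * (n + d).choose d := by
  rw [show n + 1 + d = n + d + 1 by omega, mul_comm, mul_comm (n + d + 1),
    Nat.choose_mul_succ_eq, show n + d + 1 - d = n + 1 by omega]

theorem hermite_type_appell_general (d : ℕ) (H : ℕ → Polynomial ℝ)
    (hinit : ∀ n ≤ d, H n = X ^ n)
    (hrec : ∀ n : ℕ, H (n + d + 1) =
      X * H (n + d) - C (((d : ℝ) + 1)⁻¹ * (Nat.choose (n + d) d : ℝ)) * H n) :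
    ∀ n : ℕ, derivative (H (n + 1)) = C ((n : ℝ) + 1) * H n := by
  refine Polynomial.AppellRecurrence.derivative_succ hinit hrec fun n => ?_
  have h := congrArg (Nat.cast : ℕ → ℝ) (Nat.add_one_mul_choose_add_one_add n d)
  push_cast at h
  linear_combination ((d : ℝ) + 1)⁻¹ * h

/-- The `d`-symmetric sequence `Ĥ_n` defined by `Ĥ_n = x^n` for `0 ≤ n ≤ d` and
`Ĥ_{n+d+1} = x Ĥ_{n+d} − (d+1)⁻¹ C(n+d, d) Ĥ_n` has the Appell property
`Ĥ_{n+1}' = (n+1) Ĥ_n`. -/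
theorem hermite_type_appell (d : ℕ) (hd : 1 ≤ d) (H : ℕ → Polynomial ℝ)
    (hinit : ∀ n ≤ d, H n = X ^ n)
    (hrec : ∀ n : ℕ, H (n + d + 1) =
      X * H (n + d) - C (((d : ℝ) + 1)⁻¹ * (Nat.choose (n + d) d : ℝ)) * H n) :
    ∀ n : ℕ, derivative (H (n + 1)) = C ((n : ℝ) + 1) * H n :=
  hermite_type_appell_general d H hinit hrec
end
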